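/- arXiv:2605.26009 — 3 statements merged into one kernel-verified Lean document; each statement's English description precedes it below -/
import Mathlib

section
/- Let R, R', T be words over the alphabet {1,…,n−1} such that both concatenations RT and R'T are reduced words and RT is commutation-equivalent to R'T. Then R is commutation-equivalent to R'. -/
open scoped Classical

namespace BSDist

/-- The simple transposition `s i` (1-indexed): it swaps the values `i` and `i+1`
of `{1,…,n}`, i.e. the elements `i-1` and `i` of `Fin n`.  Out-of-range letters
give the identity. -/
def sTr (n : ℕ) (i : ℕ) : Equiv.Perm (Fin n) :=
  if h : 1 ≤ i ∧ i < n then Equiv.swap ⟨i - 1, by omega⟩ ⟨i, h.2⟩ else 1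

/-- The product `w(R) = s_{i₁} ⋯ s_{i_L}` of a word. -/
def wprod (n : ℕ) (R : List ℕ) : Equiv.Perm (Fin n) := (R.map (sTr n)).prod

/-- The Coxeter length of a permutation: its number of inversions. -/
def len {n : ℕ} (w : Equiv.Perm (Fin n)) : ℕ :=
  (Finset.univ.filter (fun p : Fin n × Fin n => p.1 < p.2 ∧ w p.2 < w p.1)).card

/-- A word over the alphabet `{1,…,n-1}`. -/
def Alphabet (n : ℕ) (R : List ℕ) : Prop := ∀ i ∈ R, 1 ≤ i ∧ i < n

/-- `R` is a reduced word (over the alphabet `{1,…,n-1}`). -/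
def IsReducedWord (n : ℕ) (R : List ℕ) : Prop :=
  Alphabet n R ∧ R.length = len (wprod n R)

/-- `R` is a reduced word for `w`. -/
def IsReducedWordFor (n : ℕ) (R : List ℕ) (w : Equiv.Perm (Fin n)) : Prop :=
  IsReducedWord n R ∧ wprod n R = w

/-- The weight `wt_R : S_n → ℤ[q]`, defined by the recursion
`wt_∅(e) = 1`, `wt_∅(x) = 0` for `x ≠ e`, and for an appended letter `i`:
`wt_{Ri}(x) = wt_R(x) + wt_R(x sᵢ)` if `ℓ(x sᵢ) > ℓ(x)`, and
`wt_{Ri}(x) = q·wt_R(x) + q·wt_R(x sᵢ)` if `ℓ(x sᵢ) < ℓ(x)`. -/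
noncomputable def wt (n : ℕ) (R : List ℕ) : Equiv.Perm (Fin n) → Polynomial ℤ :=
  R.foldl
    (fun f i x =>
      if len x < len (x * sTr n i) then f x + f (x * sTr n i)
      else Polynomial.X * f x + Polynomial.X * f (x * sTr n i))
    (fun x => if x = 1 then 1 else 0)

/-- A single commutation move: replace a consecutive factor `ij` by `ji` where
`|i - j| > 1`. -/
def CommMove (R R' : List ℕ) : Prop :=
  ∃ (A B : List ℕ) (i j : ℕ), (i + 1 < j ∨ j + 1 < i) ∧
    R = A ++ [i, j] ++ B ∧ R' = A ++ [j, i] ++ B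

/-- Commutation equivalence: a finite sequence of commutation moves. -/
def CommEquiv (R R' : List ℕ) : Prop := Relation.ReflTransGen CommMove R R'

/-- A single braid move: replace a consecutive factor `k(k+1)k` by `(k+1)k(k+1)`. -/
def BraidMove (R R' : List ℕ) : Prop :=
  ∃ (A B : List ℕ) (k : ℕ),
    R = A ++ [k, k + 1, k] ++ B ∧ R' = A ++ [k + 1, k, k + 1] ++ B

/-- The Demazure product of a word, computed left to right:
`w ∗ sᵢ = w sᵢ` if `ℓ(w sᵢ) > ℓ(w)`, and `w ∗ sᵢ = w` otherwise. -/
def dem (n : ℕ) (R : List ℕ) : Equiv.Perm (Fin n) :=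
  R.foldl (fun w i => if len w < len (w * sTr n i) then w * sTr n i else w) 1

/-- `app w t` is the value `w(t)` in 1-indexed one-line notation:
positions and values both run through `{1,…,n}`. -/
def app {n : ℕ} (w : Equiv.Perm (Fin n)) (t : ℕ) : ℕ :=
  if h : 1 ≤ t ∧ t ≤ n then ((w ⟨t - 1, by omega⟩ : Fin n) : ℕ) + 1 else 0

/-- `posOf x t = x⁻¹(t)`, the (1-indexed) position of the value `t` in `x`. -/
def posOf {n : ℕ} (x : Equiv.Perm (Fin n)) (t : ℕ) : ℕ := app x⁻¹ t

/-- The longest element `w₀` of `S_n` (the order-reversing permutation). -/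
def w0 (n : ℕ) : Equiv.Perm (Fin n) := ⟨Fin.rev, Fin.rev, Fin.rev_rev, Fin.rev_rev⟩

/-- The value pair `(a,b)` (with `a < b`) is an inversion of `x`:
`x⁻¹(a) > x⁻¹(b)`. -/
def IsInversion {n : ℕ} (x : Equiv.Perm (Fin n)) (a b : ℕ) : Prop :=
  posOf x b < posOf x a

/-- `tau R a b` is the first time `k` at which the pair `(a,b)` is an inversion
of the prefix product `s_{i₁} ⋯ s_{i_k}`. -/
noncomputable def tau (n : ℕ) (R : List ℕ) (a b : ℕ) : ℕ :=
  sInf {k | IsInversion (wprod n (R.take k)) a b}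

/-- `T_R(a,b,c) = +1` if `τ_R(a,b) < τ_R(b,c)` and `-1` otherwise. -/
noncomputable def T (n : ℕ) (R : List ℕ) (a b c : ℕ) : ℤ :=
  if tau n R a b < tau n R b c then 1 else -1

/-- `Supp(x) = {t : pos_x(t) ≠ pos_{w₀}(t)}`. -/
noncomputable def Supp (n : ℕ) (x : Equiv.Perm (Fin n)) : Finset ℕ :=
  (Finset.Icc 1 n).filter (fun t => posOf x t ≠ posOf (w0 n) t)

/-- `Fwd(x) = {t : pos_x(t) < pos_{w₀}(t)}`. -/
noncomputable def Fwd (n : ℕ) (x : Equiv.Perm (Fin n)) : Finset ℕ :=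
  (Finset.Icc 1 n).filter (fun t => posOf x t < posOf (w0 n) t)

/-- `Bwd(x) = {t : pos_x(t) > pos_{w₀}(t)}`. -/
noncomputable def Bwd (n : ℕ) (x : Equiv.Perm (Fin n)) : Finset ℕ :=
  (Finset.Icc 1 n).filter (fun t => posOf (w0 n) t < posOf x t)

/-- `D_R(x)`: the coefficient of `q^{N-1}` in `wt_R(x)`, where `N = n(n-1)/2`. -/
noncomputable def D (n : ℕ) (R : List ℕ) (x : Equiv.Perm (Fin n)) : ℤ :=
  (wt n R x).coeff (n * (n - 1) / 2 - 1)

/-- `σ_b(x) = sign(pos_x(b) − pos_{w₀}(b)) ∈ {−1,0,+1}`. -/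
noncomputable def sigmaVal (n : ℕ) (b : ℕ) (x : Equiv.Perm (Fin n)) : ℤ :=
  Int.sign ((posOf x b : ℤ) - (posOf (w0 n) b : ℤ))

/-- `Θ_R(a,b,c) = Σ_{x : Supp(x) = [a,c]} D_R(x)·σ_b(x)`. -/
noncomputable def Theta (n : ℕ) (R : List ℕ) (a b c : ℕ) : ℤ :=
  ∑ x ∈ Finset.univ.filter (fun x : Equiv.Perm (Fin n) => Supp n x = Finset.Icc a c),
    D n R x * sigmaVal n b x

end BSDist

namespace BSDist

/-- projection onto the pair of letters {c,d} -/
def projP (c d : ℕ) : ℕ → Bool := fun x => x == c || x == d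

lemma commMove_symm {u v : List ℕ} (h : CommMove u v) : CommMove v u := by
  obtain ⟨A, B, i, j, hij, e1, e2⟩ := h
  exact ⟨A, B, j, i, hij.symm, e2, e1⟩

lemma commEquiv_symm {u v : List ℕ} (h : CommEquiv u v) : CommEquiv v u :=
  (@Relation.ReflTransGen.stdSymm _ _ ⟨fun _ _ hm => commMove_symm hm⟩).symm _ _ h

lemma commEquiv_cons (a : ℕ) {u v : List ℕ} (h : CommEquiv u v) :
    CommEquiv (a :: u) (a :: v) := by
  refine Relation.ReflTransGen.lift (a :: ·) ?_ _ _ h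
  rintro x y ⟨A, B, i, j, hij, e1, e2⟩
  show CommMove (a :: x) (a :: y)
  exact ⟨a :: A, B, i, j, hij, by simp [e1], by simp [e2]⟩

lemma filter_commMove {c d : ℕ} (hc : c ≤ d + 1) (hd : d ≤ c + 1)
    {u v : List ℕ} (h : CommMove u v) :
    u.filter (projP c d) = v.filter (projP c d) := by
  obtain ⟨A, B, i, j, hij, e1, e2⟩ := h
  subst e1; subst e2
  simp only [List.filter_append]
  congr 1
  congr 1
  have hnot : ¬ (projP c d i = true ∧ projP c d j = true) := by
    simp only [projP, Bool.or_eq_true, beq_iff_eq]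
    omega
  by_cases hi : projP c d i = true <;> by_cases hj : projP c d j = true <;>
    simp [List.filter_cons, hi, hj] at hnot ⊢

lemma filter_commEquiv {c d : ℕ} (hc : c ≤ d + 1) (hd : d ≤ c + 1)
    {u v : List ℕ} (h : CommEquiv u v) :
    u.filter (projP c d) = v.filter (projP c d) := by
  induction h with
  | refl => rfl
  | tail _ hm ih => exact ih.trans (filter_commMove hc hd hm)

lemma bubble (a : ℕ) (p s : List ℕ) (hp : ∀ b ∈ p, a + 1 < b ∨ b + 1 < a) :
    CommEquiv (p ++ a :: s) (a :: (p ++ s)) := by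
  induction p with
  | nil => exact Relation.ReflTransGen.refl
  | cons x p' ih =>
    have h1 : CommEquiv (x :: (p' ++ a :: s)) (x :: a :: (p' ++ s)) :=
      commEquiv_cons x (ih fun b hb => hp b (List.mem_cons_of_mem _ hb))
    have hx := hp x List.mem_cons_self
    have h2 : CommMove (x :: a :: (p' ++ s)) (a :: x :: (p' ++ s)) :=
      ⟨[], p' ++ s, x, a, hx.symm, rfl, rfl⟩
    simpa [CommEquiv] using h1.tail h2

lemma first_occ {a : ℕ} : ∀ {v : List ℕ}, a ∈ v →
    ∃ p s, v = p ++ a :: s ∧ a ∉ p := by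
  intro v hv
  induction v with
  | nil => cases hv
  | cons x v' ih =>
    by_cases hx : x = a
    · exact ⟨[], v', by simp [hx], by simp⟩
    · rcases List.mem_cons.1 hv with h | h
      · exact absurd h.symm hx
      · obtain ⟨p, s, e, hnp⟩ := ih h
        exact ⟨x :: p, s, by simp [e], by simp [hnp, Ne.symm hx]⟩

lemma cancel (u : List ℕ) : ∀ v : List ℕ,
    (∀ c d : ℕ, c ≤ d + 1 → d ≤ c + 1 →
      u.filter (projP c d) = v.filter (projP c d)) → CommEquiv u v := by
  induction u with
  | nil =>
    intro v hproj
    cases v with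
    | nil => exact Relation.ReflTransGen.refl
    | cons b v' =>
      have := hproj b b (Nat.le_succ b) (Nat.le_succ b)
      simp [projP, List.filter_cons] at this
  | cons a u' ih =>
    intro v hproj
    -- a ∈ v
    have hav : a ∈ v := by
      have h := hproj a a (Nat.le_succ a) (Nat.le_succ a)
      have : a ∈ v.filter (projP a a) := by
        rw [← h]; simp [projP, List.filter_cons]
      exact (List.mem_filter.1 this).1
    obtain ⟨p, s, hv, hnp⟩ := first_occ hav
    have hpcomm : ∀ b ∈ p, a + 1 < b ∨ b + 1 < a := by
      intro b hb
      by_contra hcon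
      push_neg at hcon
      have hdep1 : a ≤ b + 1 := by omega
      have hdep2 : b ≤ a + 1 := by omega
      have h := hproj a b hdep1 hdep2
      rw [hv, List.filter_append] at h
      have hpa : projP a b a = true := by simp [projP]
      have hpb : projP a b b = true := by simp [projP]
      have hbf : b ∈ p.filter (projP a b) := List.mem_filter.2 ⟨hb, hpb⟩
      cases hfp : p.filter (projP a b) with
      | nil => rw [hfp] at hbf; cases hbf
      | cons x l =>
        rw [hfp] at h
        rw [List.filter_cons_of_pos hpa] at h
        have hx : x ∈ p := by
          have : x ∈ p.filter (projP a b) := by rw [hfp]; exact List.mem_cons_self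
          exact (List.mem_filter.1 this).1
        have : a = x := by
          have := congrArg List.head? h
          simpa using this
        exact hnp (this ▸ hx)
    have hbub : CommEquiv v (a :: (p ++ s)) := by
      rw [hv]; exact bubble a p s hpcomm
    have hproj' : ∀ c d : ℕ, c ≤ d + 1 → d ≤ c + 1 →
        u'.filter (projP c d) = (p ++ s).filter (projP c d) := by
      intro c d hc hd
      have h := (hproj c d hc hd).trans (filter_commEquiv hc hd hbub)
      by_cases hq : projP c d a = true
      · rw [List.filter_cons_of_pos hq, List.filter_cons_of_pos hq] at h
        exact List.tail_eq_of_cons_eq h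
      · rw [List.filter_cons_of_neg (by simpa using hq),
            List.filter_cons_of_neg (by simpa using hq)] at h
        exact h
    exact (commEquiv_cons a (ih (p ++ s) hproj')).trans (commEquiv_symm hbub)


/-- If `RT` and `R'T` are both reduced words and `RT` is
commutation-equivalent to `R'T`, then `R` is commutation-equivalent to
`R'`. -/
theorem commEquiv_of_commEquiv_append
    (n : ℕ) (hn : 2 ≤ n) (R R' T : List ℕ)
    (h1 : IsReducedWord n (R ++ T)) (h2 : IsReducedWord n (R' ++ T))
    (h : CommEquiv (R ++ T) (R' ++ T)) :
    CommEquiv R R' := by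
  apply cancel
  intro c d hc hd
  have := filter_commEquiv hc hd h
  rw [List.filter_append, List.filter_append] at this
  exact List.append_cancel_right this

end BSDist
end

section
/- Suppose T_1, T_2 are words and 1 ≤ i ≤ n−2 are such that R_1 = T_1·i(i+1)i·T_2 and R_2 = T_1·(i+1)i(i+1)·T_2 are both reduced words for the longest element w_0 ∈ S_n. Then the two Demazure shortenings v_1 = Dem(T_1·i·T_2) and v_2 = Dem(T_1·(i+1)·T_2) are distinct elements of S_n. -/
open scoped Classical

namespace BSDist

variable {n : ℕ}

/-! ### Auxiliary infrastructure for Statement 11 -/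

private lemma BS_swap_mono {P Q p q : Fin n} (hPQ : (P:ℕ)+1 = Q) (hpq : p < q)
    (hne : ¬(p = P ∧ q = Q)) : Equiv.swap P Q p < Equiv.swap P Q q := by
  simp only [Equiv.swap_apply_def]
  split_ifs with h1 h2 h3 h4 h5 h6 <;>
    simp only [Fin.lt_def, Fin.ext_iff, not_and] at * <;> omega

private lemma BS_len_mul_swap {P Q : Fin n} (hPQ : (P:ℕ)+1 = Q) (w : Equiv.Perm (Fin n))
    (hasc : w P < w Q) : len (w * Equiv.swap P Q) = len w + 1 := by
  classical
  set σ := Equiv.swap P Q with hσdef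
  have hσinvol : ∀ r, σ (σ r) = r := fun r => Equiv.swap_apply_self P Q r
  have hPltQ : P < Q := by rw [Fin.lt_def]; omega
  have hσP : σ P = Q := Equiv.swap_apply_left P Q
  have hσQ : σ Q = P := Equiv.swap_apply_right P Q
  have hmain : (Finset.univ.filter (fun p : Fin n × Fin n => p.1 < p.2 ∧ (w*σ) p.2 < (w*σ) p.1))
      = insert (P, Q) ((Finset.univ.filter
          (fun p : Fin n × Fin n => p.1 < p.2 ∧ w p.2 < w p.1)).image
            (fun r => (σ r.1, σ r.2))) := by
    ext ⟨p, q⟩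
    simp only [Finset.mem_filter, Finset.mem_univ, true_and]
    simp only [Finset.mem_filter, Finset.mem_univ, true_and, Finset.mem_insert,
      Finset.mem_image, Equiv.Perm.mul_apply, Prod.mk.injEq, Prod.exists]
    constructor
    · rintro ⟨hlt, hinv⟩
      by_cases hc : p = P ∧ q = Q
      · exact Or.inl hc
      · exact Or.inr ⟨σ p, σ q, ⟨BS_swap_mono hPQ hlt hc, hinv⟩, hσinvol p, hσinvol q⟩
    · rintro (⟨hp, hq⟩ | ⟨a, c, ⟨hac, hwac⟩, ha, hc⟩)
      · subst hp; subst hq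
        exact ⟨hPltQ, by rw [hσQ, hσP]; exact hasc⟩
      · subst ha; subst hc
        have hne : ¬(a = P ∧ c = Q) := by
          rintro ⟨rfl, rfl⟩
          rw [hσP, hσQ] at *
          exact absurd hwac (not_lt.mpr (le_of_lt hasc))
        refine ⟨BS_swap_mono hPQ hac hne, ?_⟩
        rw [hσinvol, hσinvol]; exact hwac
  have hinj : Function.Injective (fun r : Fin n × Fin n => (σ r.1, σ r.2)) := by
    intro r s h
    simp only [Prod.mk.injEq] at h
    exact Prod.ext (σ.injective h.1) (σ.injective h.2)
  have hnotmem : (P, Q) ∉ (Finset.univ.filter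
      (fun p : Fin n × Fin n => p.1 < p.2 ∧ w p.2 < w p.1)).image
        (fun r => (σ r.1, σ r.2)) := by
    simp only [Finset.mem_image, Finset.mem_filter, Finset.mem_univ, true_and, Prod.mk.injEq,
      Prod.exists]
    rintro ⟨a, c, ⟨hac, -⟩, ha, hc⟩
    have ha' : a = Q := by have := congrArg σ ha; rwa [hσinvol, hσP] at this
    have hc' : c = P := by have := congrArg σ hc; rwa [hσinvol, hσQ] at this
    subst ha'; subst hc'
    exact absurd hac (not_lt.mpr (le_of_lt hPltQ))
  show (Finset.univ.filter (fun p : Fin n × Fin n => p.1 < p.2 ∧ (w*σ) p.2 < (w*σ) p.1)).card = _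
  rw [hmain, Finset.card_insert_of_notMem hnotmem, Finset.card_image_of_injective _ hinj]
  rfl

private lemma BS_len_lt_iff {P Q : Fin n} (hPQ : (P:ℕ)+1 = Q) (w : Equiv.Perm (Fin n)) :
    len w < len (w * Equiv.swap P Q) ↔ w P < w Q := by
  have hPneQ : P ≠ Q := by simp [Fin.ext_iff]; omega
  rcases lt_trichotomy (w P) (w Q) with h | h | h
  · rw [BS_len_mul_swap hPQ w h]; simpa using h
  · exact absurd (w.injective h) hPneQ
  · have h2 : (w * Equiv.swap P Q) P < (w * Equiv.swap P Q) Q := by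
      simpa [Equiv.Perm.mul_apply] using h
    have := BS_len_mul_swap hPQ (w * Equiv.swap P Q) h2
    rw [mul_assoc, Equiv.swap_mul_self, mul_one] at this
    rw [this]
    constructor
    · omega
    · intro hh; exact absurd hh (not_lt.mpr (le_of_lt h))

private lemma BS_sTr_eq {j : ℕ} (h1 : 1 ≤ j) (h2 : j < n) :
    sTr n j = Equiv.swap ⟨j-1, by omega⟩ ⟨j, h2⟩ := dif_pos ⟨h1, h2⟩

private lemma BS_sTr_invalid {j : ℕ} (h : ¬(1 ≤ j ∧ j < n)) : sTr n j = 1 := dif_neg h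

private lemma BS_sTr_eq' {j : ℕ} (h1 : 1 ≤ j) (h2 : j < n) {P Q : Fin n}
    (hP : (P:ℕ) = j - 1) (hQ : (Q:ℕ) = j) : sTr n j = Equiv.swap P Q := by
  rw [show P = (⟨j-1, by omega⟩ : Fin n) from Fin.ext hP,
    show Q = (⟨j, h2⟩ : Fin n) from Fin.ext hQ]
  exact BS_sTr_eq h1 h2

private lemma BS_len_one : len (1 : Equiv.Perm (Fin n)) = 0 := by
  rw [len, Finset.card_eq_zero]
  ext p
  simp only [Finset.mem_filter, Finset.mem_univ, true_and]
  simp only [Finset.mem_filter, Finset.mem_univ, true_and, Equiv.Perm.one_apply,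
    Finset.notMem_empty, iff_false, not_and]
  exact fun h => asymm h

private lemma BS_wprod_append (A B : List ℕ) :
    wprod n (A ++ B) = wprod n A * wprod n B := by
  simp [wprod, List.prod_append]

private lemma BS_wprod_singleton (j : ℕ) : wprod n [j] = sTr n j := by simp [wprod]

private lemma BS_len_step_le (w : Equiv.Perm (Fin n)) (j : ℕ) :
    len (w * sTr n j) ≤ len w + 1 := by
  by_cases h : 1 ≤ j ∧ j < n
  · rw [BS_sTr_eq h.1 h.2]
    set P : Fin n := ⟨j-1, by omega⟩
    set Q : Fin n := ⟨j, h.2⟩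
    have hPQ : (P:ℕ)+1 = Q := by simp [P, Q]; omega
    rcases lt_trichotomy (w P) (w Q) with hc | hc | hc
    · rw [BS_len_mul_swap hPQ w hc]
    · exact absurd (w.injective hc) (by simp [P, Q, Fin.ext_iff]; omega)
    · have h2 : (w * Equiv.swap P Q) P < (w * Equiv.swap P Q) Q := by
        simpa [Equiv.Perm.mul_apply] using hc
      have := BS_len_mul_swap hPQ (w * Equiv.swap P Q) h2
      rw [mul_assoc, Equiv.swap_mul_self, mul_one] at this
      omega
  · rw [BS_sTr_invalid h, mul_one]; omega

private lemma BS_len_wprod_append_le (D : List ℕ) : ∀ C : List ℕ,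
    len (wprod n (C ++ D)) ≤ len (wprod n C) + D.length := by
  induction D with
  | nil => intro C; simp
  | cons d D' ih =>
    intro C
    have h1 : C ++ d :: D' = (C ++ [d]) ++ D' := by simp
    rw [h1]
    have h2 := ih (C ++ [d])
    have h3 : len (wprod n (C ++ [d])) ≤ len (wprod n C) + 1 := by
      rw [BS_wprod_append, BS_wprod_singleton]
      exact BS_len_step_le _ _
    simp only [List.length_cons]
    omega

private lemma BS_len_wprod_le (C : List ℕ) : len (wprod n C) ≤ C.length := by
  have h0 : wprod n ([] : List ℕ) = 1 := rfl
  have := BS_len_wprod_append_le (n := n) C []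
  simpa [h0, BS_len_one] using this

private lemma BS_ascent_of_split {R A : List ℕ} {j : ℕ} {B : List ℕ} (hR : R = A ++ j :: B)
    (hlen : R.length = len (wprod n R)) :
    ∃ (h1 : 1 ≤ j) (h2 : j < n),
      (∀ (P Q : Fin n), (P:ℕ) = j - 1 → (Q:ℕ) = j → wprod n A P < wprod n A Q) ∧
      len (wprod n (A ++ [j])) = len (wprod n A) + 1 := by
  subst hR
  have hsplit : A ++ j :: B = (A ++ [j]) ++ B := by simp
  have h1 : len (wprod n (A ++ j :: B)) ≤ len (wprod n (A ++ [j])) + B.length := by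
    rw [hsplit]; exact BS_len_wprod_append_le B (A ++ [j])
  have h2 : len (wprod n (A ++ [j])) ≤ len (wprod n A) + 1 := by
    rw [BS_wprod_append, BS_wprod_singleton]; exact BS_len_step_le _ _
  have h3 : len (wprod n A) ≤ A.length := BS_len_wprod_le A
  have hL : (A ++ j :: B).length = A.length + B.length + 1 := by simp; omega
  have hkey : len (wprod n (A ++ [j])) = len (wprod n A) + 1 ∧ len (wprod n A) = A.length := by
    omega
  have hval : 1 ≤ j ∧ j < n := by
    by_contra hcon
    rw [BS_wprod_append, BS_wprod_singleton, BS_sTr_invalid hcon, mul_one] at hkey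
    omega
  refine ⟨hval.1, hval.2, ?_, hkey.1⟩
  intro P Q hPv hQv
  rw [show P = (⟨j-1, by omega⟩ : Fin n) from Fin.ext hPv,
    show Q = (⟨j, hval.2⟩ : Fin n) from Fin.ext hQv]
  have hPQ : ((⟨j-1, by omega⟩ : Fin n):ℕ)+1 = ((⟨j, hval.2⟩ : Fin n):ℕ) := by simp; omega
  have h5 := hkey.1
  rw [BS_wprod_append, BS_wprod_singleton, BS_sTr_eq hval.1 hval.2] at h5
  exact (BS_len_lt_iff hPQ (wprod n A)).mp (by omega)

/-- The Demazure step. -/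
private def demStep (n : ℕ) : Equiv.Perm (Fin n) → ℕ → Equiv.Perm (Fin n) :=
  fun w i => if len w < len (w * sTr n i) then w * sTr n i else w

private lemma BS_dem_eq_foldl (R : List ℕ) : dem n R = R.foldl (demStep n) 1 := rfl

private lemma BS_demStep_eq {j : ℕ} (h1 : 1 ≤ j) (h2 : j < n) (x : Equiv.Perm (Fin n)) :
    demStep n x j = if x ⟨j-1, by omega⟩ < x ⟨j, h2⟩
      then x * Equiv.swap ⟨j-1, by omega⟩ ⟨j, h2⟩ else x := by
  unfold demStep
  rw [BS_sTr_eq h1 h2]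
  exact if_congr (BS_len_lt_iff (by simp; omega) x) rfl rfl

private lemma BS_demStep_eq' {j : ℕ} (h1 : 1 ≤ j) (h2 : j < n) {P Q : Fin n}
    (hP : (P:ℕ) = j - 1) (hQ : (Q:ℕ) = j) (x : Equiv.Perm (Fin n)) :
    demStep n x j = if x P < x Q then x * Equiv.swap P Q else x := by
  rw [show P = (⟨j-1, by omega⟩ : Fin n) from Fin.ext hP,
     show Q = (⟨j, h2⟩ : Fin n) from Fin.ext hQ]
  exact BS_demStep_eq h1 h2 x

private lemma BS_dem_prefix {R : List ℕ} (hlen : R.length = len (wprod n R)) :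
    ∀ (A B : List ℕ), R = A ++ B → A.foldl (demStep n) 1 = wprod n A := by
  intro A
  induction A using List.reverseRecOn with
  | nil => intro B h; rfl
  | append_singleton A' j ih =>
    intro B hR
    have hR' : R = A' ++ (j :: B) := by simpa using hR
    have hfold : (A' ++ [j]).foldl (demStep n) 1 = demStep n (A'.foldl (demStep n) 1) j := by
      simp [List.foldl_append]
    rw [hfold, ih (j :: B) hR']
    obtain ⟨h1, h2, hasc, -⟩ := BS_ascent_of_split hR' hlen
    rw [BS_demStep_eq h1 h2, if_pos (hasc _ _ rfl rfl), BS_wprod_append, BS_wprod_singleton,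
      BS_sTr_eq h1 h2]

/-- Invariant for world 1. -/
private def J (w x : Equiv.Perm (Fin n)) (b : Fin n) : Prop :=
  x⁻¹ b < w⁻¹ b ∧ b < w (x⁻¹ b) ∧ ∀ q, w q < b → b < x q → w⁻¹ b < q

/-- Invariant for world 2. -/
private def J' (w y : Equiv.Perm (Fin n)) (b : Fin n) : Prop :=
  w⁻¹ b < y⁻¹ b ∧ w (y⁻¹ b) < b ∧ ∀ q, b < w q → y q < b → q < w⁻¹ b
private lemma J_step_core {w x : Equiv.Perm (Fin n)} {b P Q : Fin n}
    (hPQ : (P:ℕ)+1 = Q) (hasc : w P < w Q) (hJ : J w x b) :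
    J (w * Equiv.swap P Q) (if x P < x Q then x * Equiv.swap P Q else x) b := by
  obtain ⟨h1, h2, h3⟩ := hJ
  set σ := Equiv.swap P Q with hσdef
  have hσP : σ P = Q := Equiv.swap_apply_left P Q
  have hσQ : σ Q = P := Equiv.swap_apply_right P Q
  have hσo : ∀ r, r ≠ P → r ≠ Q → σ r = r := fun r h h' => Equiv.swap_apply_of_ne_of_ne h h'
  have hPneQ : P ≠ Q := by intro h; rw [h] at hPQ; omega
  have hwinv : (w * σ)⁻¹ b = σ (w⁻¹ b) := by
    rw [mul_inv_rev, Equiv.Perm.mul_apply, hσdef, Equiv.swap_inv]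
  have hxinv : (x * σ)⁻¹ b = σ (x⁻¹ b) := by
    rw [mul_inv_rev, Equiv.Perm.mul_apply, hσdef, Equiv.swap_inv]
  have hmulσ : ∀ (z : Equiv.Perm (Fin n)) (q : Fin n), (z * σ) q = z (σ q) := fun z q => rfl
  obtain ⟨p, hp⟩ : ∃ p, x⁻¹ b = p := ⟨_, rfl⟩
  obtain ⟨pb, hpb⟩ : ∃ pb, w⁻¹ b = pb := ⟨_, rfl⟩
  have hxp : x p = b := by rw [← hp]; exact x.apply_symm_apply b
  have hwpb : w pb = b := by rw [← hpb]; exact w.apply_symm_apply b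
  rw [hp] at hxinv
  rw [hpb] at hwinv
  rw [hp, hpb] at h1
  rw [hp] at h2
  simp only [hpb] at h3
  have hppb : p ≠ pb := by
    intro h; rw [h, hwpb] at h2; exact lt_irrefl _ h2
  have hwσP : (w * σ) P = w Q := by rw [hmulσ, hσP]
  have hwσQ : (w * σ) Q = w P := by rw [hmulσ, hσQ]
  have e1 : (p:ℕ) < (pb:ℕ) := Fin.lt_def.mp h1
  have ePQ : (P:ℕ) + 1 = (Q:ℕ) := hPQ
  rw [J, hwinv]
  by_cases hbP : pb = P
  · -- Case B : b is at position P in w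
    have epb : (pb:ℕ) = (P:ℕ) := congrArg Fin.val hbP
    have hwP : w P = b := by rw [← hbP]; exact hwpb
    have hbe : b < w Q := by rw [← hwP]; exact hasc
    have hpP : p ≠ P := fun h => hppb (h.trans hbP.symm)
    have hpQ : p ≠ Q := fun h => by
      have := congrArg Fin.val h; omega
    have hp' : (if x P < x Q then x * σ else x)⁻¹ b = p := by
      split_ifs with hxs
      · rw [hxinv]; exact hσo p hpP hpQ
      · exact hp
    rw [hp', hbP, hσP]
    refine ⟨by rw [Fin.lt_def]; omega, ?_, ?_⟩
    · rw [hmulσ, hσo p hpP hpQ]; exact h2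
    · intro q hq1 hq2
      by_cases hqP : q = P
      · rw [hqP, hwσP] at hq1
        exact absurd hq1 (not_lt.mpr (le_of_lt hbe))
      · by_cases hqQ : q = Q
        · rw [hqQ, hwσQ, hwP] at hq1
          exact absurd hq1 (lt_irrefl b)
        · rw [hmulσ, hσo q hqP hqQ] at hq1
          have hxq : b < x q := by
            revert hq2
            split_ifs with hxs
            · rw [hmulσ, hσo q hqP hqQ]; exact id
            · exact id
          have hc := Fin.lt_def.mp (h3 q hq1 hxq)
          have hqQ' : (q:ℕ) ≠ (Q:ℕ) := fun h => hqQ (Fin.ext h)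
          rw [Fin.lt_def]; omega
  · by_cases hbQ : pb = Q
    · -- Case C : b is at position Q in w
      have epb : (pb:ℕ) = (Q:ℕ) := congrArg Fin.val hbQ
      have hwQ : w Q = b := by rw [← hbQ]; exact hwpb
      have hdb : w P < b := by rw [← hwQ]; exact hasc
      have hpP : p ≠ P := by
        intro h
        rw [h] at h2
        exact absurd h2 (not_lt.mpr (le_of_lt hdb))
      have hpP' : (p:ℕ) ≠ (P:ℕ) := fun h => hpP (Fin.ext h)
      have hpQ : p ≠ Q := fun h => hppb (h.trans hbQ.symm)
      have hp' : (if x P < x Q then x * σ else x)⁻¹ b = p := by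
        split_ifs with hxs
        · rw [hxinv]; exact hσo p hpP hpQ
        · exact hp
      rw [hp', hbQ, hσQ]
      refine ⟨by rw [Fin.lt_def]; omega, ?_, ?_⟩
      · rw [hmulσ, hσo p hpP hpQ]; exact h2
      · intro q hq1 hq2
        by_cases hqP : q = P
        · rw [hqP, hwσP, hwQ] at hq1
          exact absurd hq1 (lt_irrefl b)
        · by_cases hqQ : q = Q
          · rw [hqQ, Fin.lt_def]; omega
          · rw [hmulσ, hσo q hqP hqQ] at hq1
            have hxq : b < x q := by
              revert hq2
              split_ifs with hxs
              · rw [hmulσ, hσo q hqP hqQ]; exact id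
              · exact id
            have hc := Fin.lt_def.mp (h3 q hq1 hxq)
            rw [Fin.lt_def]; omega
    · -- b not at P or Q in w
      have epbP : (pb:ℕ) ≠ (P:ℕ) := fun h => hbP (Fin.ext h)
      have epbQ : (pb:ℕ) ≠ (Q:ℕ) := fun h => hbQ (Fin.ext h)
      rw [hσo pb hbP hbQ]
      by_cases hpP : p = P
      · -- Case D : b at position P in x
        have hxP : x P = b := by rw [← hpP]; exact hxp
        have hbd : b < w P := by rw [← hpP]; exact h2
        have hbe : b < w Q := lt_trans hbd hasc
        have epP : (p:ℕ) = (P:ℕ) := congrArg Fin.val hpP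
        by_cases hxs : x P < x Q
        · rw [if_pos hxs, hxinv, hpP, hσP]
          refine ⟨by rw [Fin.lt_def]; omega, ?_, ?_⟩
          · rw [hmulσ, hσQ]; exact hbd
          · intro q hq1 hq2
            by_cases hqP : q = P
            · rw [hqP, hwσP] at hq1
              exact absurd hq1 (not_lt.mpr (le_of_lt hbe))
            · by_cases hqQ : q = Q
              · rw [hqQ, hwσQ] at hq1
                exact absurd hq1 (not_lt.mpr (le_of_lt hbd))
              · rw [hmulσ, hσo q hqP hqQ] at hq1
                rw [hmulσ, hσo q hqP hqQ] at hq2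
                exact h3 q hq1 hq2
        · rw [if_neg hxs, hp]
          refine ⟨h1, ?_, ?_⟩
          · rw [hpP, hwσP]; exact hbe
          · intro q hq1 hq2
            by_cases hqP : q = P
            · rw [hqP, hwσP] at hq1
              exact absurd hq1 (not_lt.mpr (le_of_lt hbe))
            · by_cases hqQ : q = Q
              · rw [hqQ, hwσQ] at hq1
                exact absurd hq1 (not_lt.mpr (le_of_lt hbd))
              · rw [hmulσ, hσo q hqP hqQ] at hq1
                exact h3 q hq1 hq2
      · by_cases hpQ : p = Q
        · -- Case E : b at position Q in x
          have hxQ : x Q = b := by rw [← hpQ]; exact hxp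
          have hbe : b < w Q := by rw [← hpQ]; exact h2
          have epQ : (p:ℕ) = (Q:ℕ) := congrArg Fin.val hpQ
          by_cases hxs : x P < x Q
          · rw [if_pos hxs, hxinv, hpQ, hσQ]
            have hxPb : x P < b := by rw [← hxQ]; exact hxs
            refine ⟨by rw [Fin.lt_def]; omega, ?_, ?_⟩
            · rw [hmulσ, hσP]; exact hbe
            · intro q hq1 hq2
              by_cases hqP : q = P
              · rw [hqP, hwσP] at hq1
                exact absurd hq1 (not_lt.mpr (le_of_lt hbe))
              · by_cases hqQ : q = Q
                · rw [hqQ, hmulσ, hσQ] at hq2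
                  exact absurd hq2 (not_lt.mpr (le_of_lt hxPb))
                · rw [hmulσ, hσo q hqP hqQ] at hq1
                  rw [hmulσ, hσo q hqP hqQ] at hq2
                  exact h3 q hq1 hq2
          · rw [if_neg hxs, hp]
            have hxQP : x Q < x P := by
              rcases lt_trichotomy (x P) (x Q) with h | h | h
              · exact absurd h hxs
              · exact absurd (x.injective h) hPneQ
              · exact h
            have hbxP : b < x P := by rw [← hxQ]; exact hxQP
            have hbd : b < w P := by
              rcases lt_trichotomy (w P) b with h | h | h
              · exfalso
                have hc := Fin.lt_def.mp (h3 P h hbxP)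
                omega
              · exact absurd ((w.injective (h.trans hwpb.symm)).symm) hbP
              · exact h
            refine ⟨h1, ?_, ?_⟩
            · rw [hpQ, hwσQ]; exact hbd
            · intro q hq1 hq2
              by_cases hqP : q = P
              · rw [hqP, hwσP] at hq1
                exact absurd hq1 (not_lt.mpr (le_of_lt hbe))
              · by_cases hqQ : q = Q
                · rw [hqQ, hwσQ] at hq1
                  exact absurd hq1 (not_lt.mpr (le_of_lt hbd))
                · rw [hmulσ, hσo q hqP hqQ] at hq1
                  exact h3 q hq1 hq2
        · -- Case A : p, pb both outside {P, Q}
          have hp' : (if x P < x Q then x * σ else x)⁻¹ b = p := by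
            split_ifs with hxs
            · rw [hxinv]; exact hσo p hpP hpQ
            · exact hp
          rw [hp']
          refine ⟨h1, ?_, ?_⟩
          · rw [hmulσ, hσo p hpP hpQ]; exact h2
          · intro q hq1 hq2
            by_cases hqP : q = P
            · rw [hqP, hwσP] at hq1
              have hwPb : w P < b := lt_trans hasc hq1
              by_cases hxs : x P < x Q
              · rw [if_pos hxs, hqP, hmulσ, hσP] at hq2
                have hc := Fin.lt_def.mp (h3 Q hq1 hq2)
                rw [hqP, Fin.lt_def]; omega
              · rw [if_neg hxs, hqP] at hq2
                rw [hqP]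
                exact h3 P hwPb hq2
            · by_cases hqQ : q = Q
              · rw [hqQ, hwσQ] at hq1
                by_cases hxs : x P < x Q
                · rw [if_pos hxs, hqQ, hmulσ, hσQ] at hq2
                  have hc := Fin.lt_def.mp (h3 P hq1 hq2)
                  rw [hqQ, Fin.lt_def]; omega
                · rw [if_neg hxs, hqQ] at hq2
                  have hxQP : x Q < x P := by
                    rcases lt_trichotomy (x P) (x Q) with h | h | h
                    · exact absurd h hxs
                    · exact absurd (x.injective h) hPneQ
                    · exact h
                  have hc := Fin.lt_def.mp (h3 P hq1 (lt_trans hq2 hxQP))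
                  rw [hqQ, Fin.lt_def]; omega
              · rw [hmulσ, hσo q hqP hqQ] at hq1
                have hxq : b < x q := by
                  revert hq2
                  split_ifs with hxs
                  · rw [hmulσ, hσo q hqP hqQ]; exact id
                  · exact id
                exact h3 q hq1 hxq

private lemma J'_step_core {w y : Equiv.Perm (Fin n)} {b P Q : Fin n}
    (hPQ : (P:ℕ)+1 = Q) (hasc : w P < w Q) (hJ : J' w y b) :
    J' (w * Equiv.swap P Q) (if y P < y Q then y * Equiv.swap P Q else y) b := by
  obtain ⟨h1, h2, h3⟩ := hJ
  set σ := Equiv.swap P Q with hσdef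
  have hσP : σ P = Q := Equiv.swap_apply_left P Q
  have hσQ : σ Q = P := Equiv.swap_apply_right P Q
  have hσo : ∀ r, r ≠ P → r ≠ Q → σ r = r := fun r h h' => Equiv.swap_apply_of_ne_of_ne h h'
  have hPneQ : P ≠ Q := by intro h; rw [h] at hPQ; omega
  have hwinv : (w * σ)⁻¹ b = σ (w⁻¹ b) := by
    rw [mul_inv_rev, Equiv.Perm.mul_apply, hσdef, Equiv.swap_inv]
  have hyinv : (y * σ)⁻¹ b = σ (y⁻¹ b) := by
    rw [mul_inv_rev, Equiv.Perm.mul_apply, hσdef, Equiv.swap_inv]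
  have hmulσ : ∀ (z : Equiv.Perm (Fin n)) (q : Fin n), (z * σ) q = z (σ q) := fun z q => rfl
  obtain ⟨p, hp⟩ : ∃ p, y⁻¹ b = p := ⟨_, rfl⟩
  obtain ⟨pb, hpb⟩ : ∃ pb, w⁻¹ b = pb := ⟨_, rfl⟩
  have hyp : y p = b := by rw [← hp]; exact y.apply_symm_apply b
  have hwpb : w pb = b := by rw [← hpb]; exact w.apply_symm_apply b
  rw [hp] at hyinv
  rw [hpb] at hwinv
  rw [hp, hpb] at h1
  rw [hp] at h2
  simp only [hpb] at h3
  have hppb : p ≠ pb := by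
    intro h; rw [h, hwpb] at h2; exact lt_irrefl _ h2
  have hwσP : (w * σ) P = w Q := by rw [hmulσ, hσP]
  have hwσQ : (w * σ) Q = w P := by rw [hmulσ, hσQ]
  have e1 : (pb:ℕ) < (p:ℕ) := Fin.lt_def.mp h1
  have ePQ : (P:ℕ) + 1 = (Q:ℕ) := hPQ
  rw [J', hwinv]
  by_cases hbP : pb = P
  · -- Case B' : b at position P in w
    have epb : (pb:ℕ) = (P:ℕ) := congrArg Fin.val hbP
    have hwP : w P = b := by rw [← hbP]; exact hwpb
    have hbe : b < w Q := by rw [← hwP]; exact hasc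
    have hpP : p ≠ P := fun h => hppb (h.trans hbP.symm)
    have hpQ : p ≠ Q := by
      intro h
      rw [h] at h2
      exact absurd h2 (not_lt.mpr (le_of_lt hbe))
    have hpQ' : (p:ℕ) ≠ (Q:ℕ) := fun h => hpQ (Fin.ext h)
    have hp' : (if y P < y Q then y * σ else y)⁻¹ b = p := by
      split_ifs with hxs
      · rw [hyinv]; exact hσo p hpP hpQ
      · exact hp
    rw [hp', hbP, hσP]
    refine ⟨by rw [Fin.lt_def]; omega, ?_, ?_⟩
    · rw [hmulσ, hσo p hpP hpQ]; exact h2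
    · intro q hq1 hq2
      by_cases hqP : q = P
      · rw [hqP, Fin.lt_def]; omega
      · by_cases hqQ : q = Q
        · rw [hqQ, hwσQ, hwP] at hq1
          exact absurd hq1 (lt_irrefl b)
        · rw [hmulσ, hσo q hqP hqQ] at hq1
          have hyq : y q < b := by
            revert hq2
            split_ifs with hxs
            · rw [hmulσ, hσo q hqP hqQ]; exact id
            · exact id
          have hc := Fin.lt_def.mp (h3 q hq1 hyq)
          rw [Fin.lt_def]; omega
  · by_cases hbQ : pb = Q
    · -- Case C' : b at position Q in w
      have epb : (pb:ℕ) = (Q:ℕ) := congrArg Fin.val hbQ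
      have hwQ : w Q = b := by rw [← hbQ]; exact hwpb
      have hdb : w P < b := by rw [← hwQ]; exact hasc
      have hpQ : p ≠ Q := fun h => hppb (h.trans hbQ.symm)
      have hpP : p ≠ P := fun h => by
        have := congrArg Fin.val h; omega
      have hp' : (if y P < y Q then y * σ else y)⁻¹ b = p := by
        split_ifs with hxs
        · rw [hyinv]; exact hσo p hpP hpQ
        · exact hp
      rw [hp', hbQ, hσQ]
      have hpQ' : (p:ℕ) ≠ (Q:ℕ) := fun h => hpQ (Fin.ext h)
      refine ⟨by rw [Fin.lt_def]; omega, ?_, ?_⟩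
      · rw [hmulσ, hσo p hpP hpQ]; exact h2
      · intro q hq1 hq2
        by_cases hqP : q = P
        · rw [hqP, hwσP, hwQ] at hq1
          exact absurd hq1 (lt_irrefl b)
        · by_cases hqQ : q = Q
          · rw [hqQ, hwσQ] at hq1
            exact absurd hq1 (not_lt.mpr (le_of_lt hdb))
          · rw [hmulσ, hσo q hqP hqQ] at hq1
            have hyq : y q < b := by
              revert hq2
              split_ifs with hxs
              · rw [hmulσ, hσo q hqP hqQ]; exact id
              · exact id
            have hc := Fin.lt_def.mp (h3 q hq1 hyq)
            have hqP' : (q:ℕ) ≠ (P:ℕ) := fun h => hqP (Fin.ext h)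
            rw [Fin.lt_def]; omega
    · -- b not at P or Q in w
      have epbP : (pb:ℕ) ≠ (P:ℕ) := fun h => hbP (Fin.ext h)
      have epbQ : (pb:ℕ) ≠ (Q:ℕ) := fun h => hbQ (Fin.ext h)
      rw [hσo pb hbP hbQ]
      by_cases hpP : p = P
      · -- Case D' : b at position P in y
        have hyP : y P = b := by rw [← hpP]; exact hyp
        have hdb : w P < b := by rw [← hpP]; exact h2
        have epP : (p:ℕ) = (P:ℕ) := congrArg Fin.val hpP
        by_cases hxs : y P < y Q
        · rw [if_pos hxs, hyinv, hpP, hσP]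
          have hbyQ : b < y Q := by rw [← hyP]; exact hxs
          refine ⟨by rw [Fin.lt_def]; omega, ?_, ?_⟩
          · rw [hmulσ, hσQ]; exact hdb
          · intro q hq1 hq2
            by_cases hqP : q = P
            · rw [hqP, hmulσ, hσP] at hq2
              exact absurd hq2 (not_lt.mpr (le_of_lt hbyQ))
            · by_cases hqQ : q = Q
              · rw [hqQ, hwσQ] at hq1
                exact absurd hq1 (not_lt.mpr (le_of_lt hdb))
              · rw [hmulσ, hσo q hqP hqQ] at hq1
                rw [hmulσ, hσo q hqP hqQ] at hq2
                exact h3 q hq1 hq2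
        · -- no swap
          rw [if_neg hxs, hp]
          have hyQP : y Q < y P := by
            rcases lt_trichotomy (y P) (y Q) with h | h | h
            · exact absurd h hxs
            · exact absurd (y.injective h) hPneQ
            · exact h
          have hyQb : y Q < b := by rw [← hyP]; exact hyQP
          have hbe : w Q < b := by
            rcases lt_trichotomy (w Q) b with h | h | h
            · exact h
            · exact absurd ((w.injective (h.trans hwpb.symm)).symm) hbQ
            · exfalso
              have hc := Fin.lt_def.mp (h3 Q h hyQb)
              omega
          refine ⟨h1, ?_, ?_⟩
          · rw [hpP, hwσP]; exact hbe
          · intro q hq1 hq2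
            by_cases hqP : q = P
            · rw [hqP, hwσP] at hq1
              exact absurd hq1 (not_lt.mpr (le_of_lt hbe))
            · by_cases hqQ : q = Q
              · rw [hqQ, hwσQ] at hq1
                exact absurd hq1 (not_lt.mpr (le_of_lt hdb))
              · rw [hmulσ, hσo q hqP hqQ] at hq1
                exact h3 q hq1 hq2
      · by_cases hpQ : p = Q
        · -- Case E' : b at position Q in y
          have hyQ : y Q = b := by rw [← hpQ]; exact hyp
          have hbe : w Q < b := by rw [← hpQ]; exact h2
          have hdb : w P < b := lt_trans hasc hbe
          have epQ : (p:ℕ) = (Q:ℕ) := congrArg Fin.val hpQ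
          by_cases hxs : y P < y Q
          · rw [if_pos hxs, hyinv, hpQ, hσQ]
            have hyPb : y P < b := by rw [← hyQ]; exact hxs
            refine ⟨by rw [Fin.lt_def]; omega, ?_, ?_⟩
            · rw [hmulσ, hσP]; exact hbe
            · intro q hq1 hq2
              by_cases hqP : q = P
              · rw [hqP, hwσP] at hq1
                exact absurd hq1 (not_lt.mpr (le_of_lt hbe))
              · by_cases hqQ : q = Q
                · rw [hqQ, hwσQ] at hq1
                  exact absurd hq1 (not_lt.mpr (le_of_lt hdb))
                · rw [hmulσ, hσo q hqP hqQ] at hq1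
                  rw [hmulσ, hσo q hqP hqQ] at hq2
                  exact h3 q hq1 hq2
          · rw [if_neg hxs, hp]
            refine ⟨h1, ?_, ?_⟩
            · rw [hpQ, hwσQ]; exact hdb
            · intro q hq1 hq2
              by_cases hqP : q = P
              · rw [hqP, hwσP] at hq1
                exact absurd hq1 (not_lt.mpr (le_of_lt hbe))
              · by_cases hqQ : q = Q
                · rw [hqQ, hyQ] at hq2
                  exact absurd hq2 (lt_irrefl b)
                · rw [hmulσ, hσo q hqP hqQ] at hq1
                  exact h3 q hq1 hq2
        · -- Case A' : p, pb both outside {P, Q}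
          have hp' : (if y P < y Q then y * σ else y)⁻¹ b = p := by
            split_ifs with hxs
            · rw [hyinv]; exact hσo p hpP hpQ
            · exact hp
          rw [hp']
          refine ⟨h1, ?_, ?_⟩
          · rw [hmulσ, hσo p hpP hpQ]; exact h2
          · intro q hq1 hq2
            by_cases hqP : q = P
            · rw [hqP, hwσP] at hq1
              by_cases hxs : y P < y Q
              · rw [if_pos hxs, hqP, hmulσ, hσP] at hq2
                have hc := Fin.lt_def.mp (h3 Q hq1 hq2)
                rw [hqP, Fin.lt_def]; omega
              · rw [if_neg hxs, hqP] at hq2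
                have hyQP : y Q < y P := by
                  rcases lt_trichotomy (y P) (y Q) with h | h | h
                  · exact absurd h hxs
                  · exact absurd (y.injective h) hPneQ
                  · exact h
                have hc := Fin.lt_def.mp (h3 Q hq1 (lt_trans hyQP hq2))
                rw [hqP, Fin.lt_def]; omega
            · by_cases hqQ : q = Q
              · rw [hqQ, hwσQ] at hq1
                have hbwQ : b < w Q := lt_trans hq1 hasc
                by_cases hxs : y P < y Q
                · rw [if_pos hxs, hqQ, hmulσ, hσQ] at hq2
                  have hc := Fin.lt_def.mp (h3 P hq1 hq2)
                  rw [hqQ, Fin.lt_def]; omega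
                · rw [if_neg hxs, hqQ] at hq2
                  have hc := Fin.lt_def.mp (h3 Q hbwQ hq2)
                  rw [hqQ, Fin.lt_def]; omega
              · rw [hmulσ, hσo q hqP hqQ] at hq1
                have hyq : y q < b := by
                  revert hq2
                  split_ifs with hxs
                  · rw [hmulσ, hσo q hqP hqQ]; exact id
                  · exact id
                exact h3 q hq1 hyq

private lemma J_fold (b : Fin n) {R : List ℕ} (hlen : R.length = len (wprod n R)) :
    ∀ (T C : List ℕ), R = C ++ T → ∀ x, J (wprod n C) x b →
      J (wprod n R) (T.foldl (demStep n) x) b := by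
  intro T
  induction T with
  | nil =>
    intro C hR x hJ
    rw [List.append_nil] at hR
    subst hR
    exact hJ
  | cons j T' ih =>
    intro C hR x hJ
    obtain ⟨h1, h2, hasc, -⟩ := BS_ascent_of_split hR hlen
    have hstep : J (wprod n (C ++ [j])) (demStep n x j) b := by
      rw [BS_wprod_append, BS_wprod_singleton, BS_sTr_eq h1 h2, BS_demStep_eq h1 h2]
      exact J_step_core (by simp; omega) (hasc _ _ rfl rfl) hJ
    have hR' : R = (C ++ [j]) ++ T' := by rw [hR]; simp
    have := ih (C ++ [j]) hR' (demStep n x j) hstep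
    simpa using this

private lemma J'_fold (b : Fin n) {R : List ℕ} (hlen : R.length = len (wprod n R)) :
    ∀ (T C : List ℕ), R = C ++ T → ∀ y, J' (wprod n C) y b →
      J' (wprod n R) (T.foldl (demStep n) y) b := by
  intro T
  induction T with
  | nil =>
    intro C hR y hJ
    rw [List.append_nil] at hR
    subst hR
    exact hJ
  | cons j T' ih =>
    intro C hR y hJ
    obtain ⟨h1, h2, hasc, -⟩ := BS_ascent_of_split hR hlen
    have hstep : J' (wprod n (C ++ [j])) (demStep n y j) b := by
      rw [BS_wprod_append, BS_wprod_singleton, BS_sTr_eq h1 h2, BS_demStep_eq h1 h2]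
      exact J'_step_core (by simp; omega) (hasc _ _ rfl rfl) hJ
    have hR' : R = (C ++ [j]) ++ T' := by rw [hR]; simp
    have := ih (C ++ [j]) hR' (demStep n y j) hstep
    simpa using this

/-- If `R₁ = T₁·i(i+1)i·T₂` and `R₂ = T₁·(i+1)i(i+1)·T₂`
are both reduced words for `w₀ ∈ S_n`, then the two Demazure shortenings
`v₁ = Dem(T₁·i·T₂)` and `v₂ = Dem(T₁·(i+1)·T₂)` are distinct. -/
theorem demazure_shortenings_ne
    (n : ℕ) (hn : 2 ≤ n) (T₁ T₂ : List ℕ) (i : ℕ)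
    (hi : 1 ≤ i ∧ i ≤ n - 2)
    (hred₁ : IsReducedWordFor n (T₁ ++ [i, i + 1, i] ++ T₂) (w0 n))
    (hred₂ : IsReducedWordFor n (T₁ ++ [i + 1, i, i + 1] ++ T₂) (w0 n)) :
    dem n (T₁ ++ [i] ++ T₂) ≠ dem n (T₁ ++ [i + 1] ++ T₂) := by
  clear hred₂
  have hlen := And.right (And.left hred₁)
  clear hred₁
  have hi1 : 1 ≤ i := hi.1
  have hin : i < n := by omega
  have hi1n : i + 1 < n := by omega
  have hi11 : 1 ≤ i + 1 := by omega
  obtain ⟨P0, v0⟩ : ∃ P : Fin n, (P:ℕ) = i - 1 := ⟨⟨i-1, by omega⟩, rfl⟩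
  obtain ⟨P1, v1⟩ : ∃ P : Fin n, (P:ℕ) = i := ⟨⟨i, hin⟩, rfl⟩
  obtain ⟨P2, v2⟩ : ∃ P : Fin n, (P:ℕ) = i + 1 := ⟨⟨i+1, hi1n⟩, rfl⟩
  have hP01 : P0 ≠ P1 := by intro h; rw [Fin.ext_iff] at h; omega
  have hP02 : P0 ≠ P2 := by intro h; rw [Fin.ext_iff] at h; omega
  have hP12 : P1 ≠ P2 := by intro h; rw [Fin.ext_iff] at h; omega
  set u := wprod n T₁ with hudef
  have hs1 : sTr n i = Equiv.swap P0 P1 := BS_sTr_eq' hi1 hin v0 v1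
  have hs2 : sTr n (i+1) = Equiv.swap P1 P2 := BS_sTr_eq' hi11 hi1n (by omega) v2
  -- ascents from reducedness
  have hsplit1 : T₁ ++ [i, i + 1, i] ++ T₂ = T₁ ++ (i :: ([i+1, i] ++ T₂)) := by simp
  obtain ⟨-, h2a, hasc1, -⟩ := BS_ascent_of_split hsplit1 hlen
  have hab : u P0 < u P1 := hasc1 P0 P1 v0 v1
  have hsplit3 : T₁ ++ [i, i + 1, i] ++ T₂ = (T₁ ++ [i, i+1]) ++ (i :: T₂) := by simp
  obtain ⟨-, h2c, hasc3, -⟩ := BS_ascent_of_split hsplit3 hlen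
  have hasc3' : wprod n (T₁ ++ [i, i+1]) P0 < wprod n (T₁ ++ [i, i+1]) P1 :=
    hasc3 P0 P1 v0 v1
  -- swap application facts
  have sA : Equiv.swap P1 P2 P0 = P0 := Equiv.swap_apply_of_ne_of_ne hP01 hP02
  have sB : Equiv.swap P0 P1 P0 = P1 := Equiv.swap_apply_left _ _
  have sC : Equiv.swap P1 P2 P1 = P2 := Equiv.swap_apply_left _ _
  have sD : Equiv.swap P0 P1 P2 = P2 :=
    Equiv.swap_apply_of_ne_of_ne (Ne.symm hP02) (Ne.symm hP12)
  have sE : Equiv.swap P0 P1 P1 = P0 := Equiv.swap_apply_right _ _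
  have sF : Equiv.swap P1 P2 P2 = P1 := Equiv.swap_apply_right _ _
  have hprod2 : wprod n [i, i+1] = Equiv.swap P0 P1 * Equiv.swap P1 P2 := by
    simp [wprod, hs1, hs2]
  have hbc : u P1 < u P2 := by
    have e := hasc3'
    rw [BS_wprod_append, hprod2] at e
    have e1 : (u * (Equiv.swap P0 P1 * Equiv.swap P1 P2)) P0
        = u (Equiv.swap P0 P1 (Equiv.swap P1 P2 P0)) := rfl
    have e2 : (u * (Equiv.swap P0 P1 * Equiv.swap P1 P2)) P1
        = u (Equiv.swap P0 P1 (Equiv.swap P1 P2 P1)) := rfl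
    rw [e1, e2, sA, sB, sC, sD] at e
    exact e
  -- the full prefix product g
  set g := wprod n (T₁ ++ [i, i + 1, i]) with hgdef
  have hprod3 : wprod n [i, i + 1, i]
      = Equiv.swap P0 P1 * (Equiv.swap P1 P2 * Equiv.swap P0 P1) := by
    simp [wprod, hs1, hs2, mul_assoc]
  have happ3 : ∀ q : Fin n,
      g q = u (Equiv.swap P0 P1 (Equiv.swap P1 P2 (Equiv.swap P0 P1 q))) := by
    intro q
    rw [hgdef, BS_wprod_append, hprod3]
    rfl
  have hgP0 : g P0 = u P2 := by rw [happ3, sB, sC, sD]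
  have hgP1 : g P1 = u P1 := by rw [happ3, sE, sA, sB]
  have hgP2 : g P2 = u P0 := by rw [happ3, sD, sF, sE]
  have hgq : ∀ q, q ≠ P0 → q ≠ P1 → q ≠ P2 → g q = u q := by
    intro q h0 h1 h2
    rw [happ3, Equiv.swap_apply_of_ne_of_ne h0 h1, Equiv.swap_apply_of_ne_of_ne h1 h2,
      Equiv.swap_apply_of_ne_of_ne h0 h1]
  set b := u P1 with hbdef
  have hginvb : g⁻¹ b = P1 := g.injective (by rw [show g (g⁻¹ b) = b from g.apply_symm_apply b, hgP1])
  -- the two demazure states after the single letter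
  set x₀ := demStep n u i with hx0def
  have hx0 : x₀ = u * Equiv.swap P0 P1 := by
    rw [hx0def, BS_demStep_eq' hi1 hin v0 v1, if_pos hab]
  have hx0app : ∀ q, x₀ q = u (Equiv.swap P0 P1 q) := by intro q; rw [hx0]; rfl
  have hx0invb : x₀⁻¹ b = P0 := x₀.injective (by rw [show x₀ (x₀⁻¹ b) = b from x₀.apply_symm_apply b, hx0app, sB])
  set y₀ := demStep n u (i+1) with hy0def
  have hy0 : y₀ = u * Equiv.swap P1 P2 := by
    rw [hy0def, BS_demStep_eq' hi11 hi1n (show (P1:ℕ) = i + 1 - 1 by omega) v2, if_pos hbc]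
  have hy0app : ∀ q, y₀ q = u (Equiv.swap P1 P2 q) := by intro q; rw [hy0]; rfl
  have hy0invb : y₀⁻¹ b = P2 := y₀.injective (by rw [show y₀ (y₀⁻¹ b) = b from y₀.apply_symm_apply b, hy0app, sF])
  -- initial invariants
  have hJ0 : J g x₀ b := by
    rw [J, hginvb, hx0invb]
    refine ⟨by rw [Fin.lt_def]; omega, by rw [hgP0]; exact hbc, ?_⟩
    intro q hq1 hq2
    by_cases hq0 : q = P0
    · rw [hq0, hgP0] at hq1
      exact absurd hq1 (not_lt.mpr (le_of_lt hbc))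
    by_cases hq1' : q = P1
    · rw [hq1', hgP1] at hq1
      exact absurd hq1 (lt_irrefl _)
    by_cases hq2' : q = P2
    · rw [hq2', Fin.lt_def]; omega
    · rw [hgq q hq0 hq1' hq2'] at hq1
      rw [hx0app, Equiv.swap_apply_of_ne_of_ne hq0 hq1'] at hq2
      exact absurd (lt_trans hq1 hq2) (lt_irrefl _)
  have hJ0' : J' g y₀ b := by
    rw [J', hginvb, hy0invb]
    refine ⟨by rw [Fin.lt_def]; omega, by rw [hgP2]; exact hab, ?_⟩
    intro q hq1 hq2
    by_cases hq0 : q = P0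
    · rw [hq0, Fin.lt_def]; omega
    by_cases hq1' : q = P1
    · rw [hq1', hgP1] at hq1
      exact absurd hq1 (lt_irrefl _)
    by_cases hq2' : q = P2
    · rw [hq2', hgP2] at hq1
      exact absurd hq1 (not_lt.mpr (le_of_lt hab))
    · rw [hgq q hq0 hq1' hq2'] at hq1
      rw [hy0app, Equiv.swap_apply_of_ne_of_ne hq1' hq2'] at hq2
      exact absurd (lt_trans hq1 hq2) (lt_irrefl _)
  -- fold along T₂
  have hmain1 := J_fold b hlen T₂ (T₁ ++ [i, i + 1, i]) rfl x₀ hJ0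
  have hmain2 := J'_fold b hlen T₂ (T₁ ++ [i, i + 1, i]) rfl y₀ hJ0'
  -- identify the Demazure products
  have hT1 : T₁.foldl (demStep n) 1 = u :=
    BS_dem_prefix hlen T₁ ([i, i + 1, i] ++ T₂) (by simp)
  have hv1 : dem n (T₁ ++ [i] ++ T₂) = T₂.foldl (demStep n) x₀ := by
    rw [BS_dem_eq_foldl, List.foldl_append, List.foldl_append, hT1]
    rfl
  have hv2 : dem n (T₁ ++ [i + 1] ++ T₂) = T₂.foldl (demStep n) y₀ := by
    rw [BS_dem_eq_foldl, List.foldl_append, List.foldl_append, hT1]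
    rfl
  rw [J] at hmain1
  rw [J'] at hmain2
  intro hEq
  rw [hv1, hv2] at hEq
  rw [hEq] at hmain1
  exact absurd (lt_trans hmain1.1 hmain2.1) (lt_irrefl _)

end BSDist
end

section
/- Let R = i_1 i_2 ⋯ i_N be a reduced word for the longest element w_0 ∈ S_n, where N = n(n−1)/2. Then for every x ∈ S_n, the coefficient D_R(x) of q^{N−1} in wt_R(x) equals the number of positions j ∈ {1,…,N} such that the Demazure product of the word obtained from R by deleting its j-th letter equals x, i.e. D_R(x) = #{ j ∈ {1,…,N} : Dem(i_1 ⋯ i_{j−1} i_{j+1} ⋯ i_N) = x }. -/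
open scoped Classical

/-!
Induct on the reduced word, appending one letter `i` at a time. The top coefficient of `wt_R` is
the indicator of `w(R)`, and the recursion for `wt` mirrors the Demazure products of `R i` with
one letter deleted. If `x sᵢ > x`, no Demazure product of a word ending in `i` equals `x` (it
always has a descent at `i`), so only deleting the last letter contributes. If `x sᵢ < x`, the
word `u i` has Demazure product `x` exactly when `u` has Demazure product `x` or `x sᵢ`, which
matches the two terms `q·wt_R(x) + q·wt_R(x sᵢ)`. Throughout, right multiplication by an
adjacent transposition changes the number of inversions by exactly one.
-/

namespace BSDist

open Equiv Finset Polynomial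

variable {n : ℕ}

lemma len_one : len (1 : Perm (Fin n)) = 0 := by
  rw [len, card_eq_zero, filter_eq_empty_iff]
  exact fun p _ h => lt_asymm h.1 h.2

lemma swap_lt_swap_iff_of_adjacent {a b p q : Fin n} (hab : (b : ℕ) = a + 1)
    (h : (p, q) ≠ (a, b) ∧ (p, q) ≠ (b, a)) : swap a b p < swap a b q ↔ p < q := by
  simp only [ne_eq, Prod.mk.injEq, not_and] at h
  simp only [swap_apply_def, Fin.lt_def, Fin.ext_iff] at h ⊢
  split_ifs <;> omega

lemma len_mul_swap_of_adjacent (w : Perm (Fin n)) {a b : Fin n} (hab : (b : ℕ) = a + 1) :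
    (len (w * swap a b) : ℤ) = len w + if w a < w b then 1 else -1 := by
  have hne : a ≠ b := fun h => by rw [h] at hab; omega
  let s := swap a b
  have hlen : ∀ v : Perm (Fin n),
      (len v : ℤ) = ∑ p : Fin n × Fin n, if p.1 < p.2 ∧ v p.2 < v p.1 then 1 else 0 := by
    intro v; rw [len, card_filter]; push_cast; rfl
  -- reindex the inversions of `w * s` by `s × s`: only the pairs `(a, b)`, `(b, a)` change status
  have hreindex : (len (w * s) : ℤ)
      = ∑ p : Fin n × Fin n, if s p.1 < s p.2 ∧ w p.2 < w p.1 then 1 else 0 := by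
    rw [hlen, ← (Equiv.prodCongr s s).sum_comp]
    simp [s, swap_apply_self]
  rw [hreindex, hlen, ← sub_eq_iff_eq_add', ← sum_sub_distrib,
    Fintype.sum_eq_add (a, b) (b, a) (by simp [hne])]
  · have hlt : a < b := by rw [Fin.lt_def]; omega
    have hwne : w a ≠ w b := w.injective.ne hne
    simp only [s, swap_apply_left, swap_apply_right, hlt, not_lt_of_gt hlt]
    rcases hwne.lt_or_gt with h | h <;> simp [h, not_lt_of_gt h]
  · rintro p hp
    simp only [s, swap_lt_swap_iff_of_adjacent hab hp, sub_self]

lemma len_mul_sTr (w : Perm (Fin n)) {i : ℕ} (hi : 1 ≤ i ∧ i < n) :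
    len (w * sTr n i) = len w + 1 ∨ len w = len (w * sTr n i) + 1 := by
  have h := len_mul_swap_of_adjacent w (a := ⟨i - 1, by omega⟩) (b := ⟨i, hi.2⟩)
    (by simp only; omega)
  rw [sTr, dif_pos hi]
  split_ifs at h <;> omega

lemma len_mul_sTr_lt_of_not_lt {w : Perm (Fin n)} {i : ℕ} (hi : 1 ≤ i ∧ i < n)
    (h : ¬ len w < len (w * sTr n i)) : len (w * sTr n i) < len w := by
  rcases len_mul_sTr w hi with h' | h' <;> omega

@[simp]
lemma mul_sTr_mul_sTr (w : Perm (Fin n)) (i : ℕ) : w * sTr n i * sTr n i = w := by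
  unfold sTr; split_ifs <;> simp [mul_assoc]

lemma wprod_append_singleton (R : List ℕ) (i : ℕ) :
    wprod n (R ++ [i]) = wprod n R * sTr n i := by
  simp [wprod]

lemma wt_append_singleton (R : List ℕ) (i : ℕ) (x : Perm (Fin n)) :
    wt n (R ++ [i]) x =
      if len x < len (x * sTr n i) then wt n R x + wt n R (x * sTr n i)
      else X * wt n R x + X * wt n R (x * sTr n i) := by
  simp [wt]

lemma dem_append_singleton (R : List ℕ) (i : ℕ) :
    dem n (R ++ [i]) =
      if len (dem n R) < len (dem n R * sTr n i) then dem n R * sTr n i else dem n R := by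
  simp only [dem, List.foldl_append, List.foldl_cons, List.foldl_nil]
  congr

lemma len_wprod_le {R : List ℕ} (hR : Alphabet n R) : len (wprod n R) ≤ R.length := by
  induction R using List.reverseRecOn with
  | nil => simp [wprod, len_one]
  | append_singleton R i ih =>
    have hi := hR i (by simp)
    have := ih fun j hj => hR j (by simp [hj])
    rw [wprod_append_singleton, List.length_append, List.length_singleton]
    rcases len_mul_sTr (wprod n R) hi with h | h <;> omega

lemma IsReducedWord.of_append_singleton {R : List ℕ} {i : ℕ} (h : IsReducedWord n (R ++ [i])) :
    IsReducedWord n R ∧ len (wprod n R) < len (wprod n R * sTr n i) := by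
  obtain ⟨hA, hlen⟩ := h
  have hRA : Alphabet n R := fun j hj => hA j (by simp [hj])
  have := len_wprod_le hRA
  rw [wprod_append_singleton, List.length_append, List.length_singleton] at hlen
  rcases len_mul_sTr (wprod n R) (hA i (by simp)) with h | h
  · exact ⟨⟨hRA, by omega⟩, by omega⟩
  · omega

lemma dem_eq_wprod {R : List ℕ} (h : IsReducedWord n R) : dem n R = wprod n R := by
  induction R using List.reverseRecOn with
  | nil => rfl
  | append_singleton R i ih =>
    obtain ⟨hR, hasc⟩ := h.of_append_singleton
    rw [dem_append_singleton, wprod_append_singleton, ih hR, if_pos hasc]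

lemma dem_append_singleton_ne {R : List ℕ} {i : ℕ} {x : Perm (Fin n)}
    (hx : len x < len (x * sTr n i)) : dem n (R ++ [i]) ≠ x := by
  rintro rfl
  rw [dem_append_singleton] at hx
  split_ifs at hx with h
  · rw [mul_sTr_mul_sTr] at hx
    omega
  · exact h hx

lemma dem_append_singleton_eq_iff {R : List ℕ} {i : ℕ} {x : Perm (Fin n)}
    (hx : len (x * sTr n i) < len x) :
    dem n (R ++ [i]) = x ↔ dem n R = x ∨ dem n R = x * sTr n i := by
  rw [dem_append_singleton]
  split_ifs with h
  · constructor
    · rintro rfl; simp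
    · rintro (h' | h')
      · rw [h'] at h; omega
      · simp [h']
  · constructor
    · exact Or.inl
    · rintro (h' | h')
      · exact h'
      · rw [h', mul_sTr_mul_sTr] at h; omega

lemma natDegree_wt_le (R : List ℕ) (x : Perm (Fin n)) : (wt n R x).natDegree ≤ R.length := by
  induction R using List.reverseRecOn generalizing x with
  | nil => simp only [wt, List.foldl_nil]; split_ifs <;> simp
  | append_singleton R i ih =>
    have hsum : (wt n R x + wt n R (x * sTr n i)).natDegree ≤ R.length :=
      natDegree_add_le_of_degree_le (ih x) (ih _)
    rw [wt_append_singleton, List.length_append, List.length_singleton, ← mul_add]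
    split_ifs
    · exact hsum.trans (Nat.le_succ _)
    · exact natDegree_mul_le.trans (by linarith [natDegree_X_le (R := ℤ)])

lemma coeff_wt_length {R : List ℕ} (h : IsReducedWord n R) (x : Perm (Fin n)) :
    (wt n R x).coeff R.length = if x = wprod n R then 1 else 0 := by
  induction R using List.reverseRecOn generalizing x with
  | nil =>
    simp only [wt, wprod, List.foldl_nil, List.map_nil, List.prod_nil, List.length_nil]
    split_ifs <;> simp
  | append_singleton R i ih =>
    obtain ⟨hR, hasc⟩ := h.of_append_singleton
    rw [wt_append_singleton, wprod_append_singleton, List.length_append, List.length_singleton]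
    by_cases hx : len x < len (x * sTr n i)
    · have hdeg (y : Perm (Fin n)) := (natDegree_wt_le R y).trans_lt R.length.lt_succ_self
      rw [if_pos hx, coeff_add, coeff_eq_zero_of_natDegree_lt (hdeg _),
        coeff_eq_zero_of_natDegree_lt (hdeg _), add_zero, if_neg]
      rintro rfl
      rw [mul_sTr_mul_sTr] at hx
      omega
    · rw [if_neg hx, coeff_add, coeff_X_mul, coeff_X_mul, ih hR, ih hR,
        if_neg (by rintro rfl; exact hx hasc), zero_add]
      exact if_congr
        ⟨fun h => by rw [← h, mul_sTr_mul_sTr], fun h => by rw [h, mul_sTr_mul_sTr]⟩ rfl rfl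

lemma card_filter_Icc_eraseIdx_append_singleton {α : Type*} (R : List α) (a : α)
    (P : List α → Prop) [DecidablePred P] :
    ((Icc 1 (R.length + 1)).filter fun j => P ((R ++ [a]).eraseIdx (j - 1))).card
      = ((Icc 1 R.length).filter fun j => P (R.eraseIdx (j - 1) ++ [a])).card
        + if P R then 1 else 0 := by
  rw [card_filter, card_filter, sum_Icc_succ_top (by omega),
    Nat.add_sub_cancel, List.eraseIdx_append_of_length_le le_rfl, Nat.sub_self,
    List.eraseIdx_cons_zero, List.append_nil]
  congr 1
  refine sum_congr rfl fun j hj => ?_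
  rw [List.eraseIdx_append_of_lt_length (by rw [mem_Icc] at hj; omega)]

/-- Multiplying by `X` shifts the coefficient of `q^{ℓ(R) - 1}` to `q^{ℓ(R)}`, which makes the
statement true for the empty word as well. -/
lemma coeff_X_mul_wt_length {R : List ℕ} (h : IsReducedWord n R) (x : Perm (Fin n)) :
    (X * wt n R x).coeff R.length
      = (((Icc 1 R.length).filter fun j => dem n (R.eraseIdx (j - 1)) = x).card : ℤ) := by
  induction R using List.reverseRecOn generalizing x with
  | nil => simp
  | append_singleton R i ih =>
    obtain ⟨hR, hasc⟩ := h.of_append_singleton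
    have hi : 1 ≤ i ∧ i < n := h.1 i (by simp)
    rw [List.length_append, List.length_singleton, coeff_X_mul, wt_append_singleton,
      card_filter_Icc_eraseIdx_append_singleton R i (fun l => dem n l = x), dem_eq_wprod hR]
    by_cases hx : len x < len (x * sTr n i)
    · have hnone : ((Icc 1 R.length).filter
          fun j => dem n (R.eraseIdx (j - 1) ++ [i]) = x).card = 0 :=
        card_eq_zero.mpr (filter_eq_empty_iff.mpr fun _ _ => dem_append_singleton_ne hx)
      have hxs : x * sTr n i ≠ wprod n R := by
        rintro hxs
        rw [← hxs, mul_sTr_mul_sTr] at hasc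
        omega
      rw [if_pos hx, hnone, coeff_add, coeff_wt_length hR, coeff_wt_length hR, if_neg hxs]
      simp [eq_comm]
    · have hxs := len_mul_sTr_lt_of_not_lt hi hx
      have hwx : wprod n R ≠ x := by rintro rfl; exact hx hasc
      have hsplit := filter_congr fun j (_ : j ∈ Icc 1 R.length) =>
        dem_append_singleton_eq_iff (R := R.eraseIdx (j - 1)) hxs
      have hdisj : Disjoint
          ((Icc 1 R.length).filter fun j => dem n (R.eraseIdx (j - 1)) = x)
          ((Icc 1 R.length).filter fun j => dem n (R.eraseIdx (j - 1)) = x * sTr n i) := by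
        refine disjoint_filter.mpr fun j _ h1 h2 => hxs.ne ?_
        rw [h1] at h2
        rw [← h2]
      rw [if_neg hx, coeff_add, ih hR, ih hR, if_neg hwx, hsplit,
        filter_or, card_union_of_disjoint hdisj]
      push_cast
      ring

lemma len_w0 : len (w0 n) = n * (n - 1) / 2 := by
  have hinv : ∀ p : Fin n × Fin n, (p.1 < p.2 ∧ w0 n p.2 < w0 n p.1) ↔ p.1 < p.2 := fun p =>
    and_iff_left_of_imp fun h => Fin.rev_lt_rev.mpr h
  rw [len, filter_congr fun p _ => hinv p, card_filter, Fintype.sum_prod_type_right]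
  simp_rw [← card_filter, filter_gt_eq_Iio, Fin.card_Iio]
  rw [Fin.sum_univ_eq_sum_range (fun k => k), sum_range_id]

/-- Let `R` be a reduced word for `w₀ ∈ S_n`, with
`N = n(n−1)/2`.  For every `x ∈ S_n`, the coefficient of `q^{N−1}` in
`wt_R(x)` equals the number of positions `j ∈ {1,…,N}` such that the Demazure
product of `R` with its `j`-th letter deleted equals `x`. -/
theorem coeff_wt_eq_card_demazure_shortenings
    (n : ℕ) (hn : 2 ≤ n) (R : List ℕ)
    (hred : IsReducedWordFor n R (w0 n))
    (N : ℕ) (hN : N = n * (n - 1) / 2)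
    (x : Equiv.Perm (Fin n)) :
    (wt n R x).coeff (N - 1)
      = (((Finset.Icc 1 N).filter
            (fun j => dem n (R.eraseIdx (j - 1)) = x)).card : ℤ) := by
  obtain ⟨hR, hw⟩ := hred
  have hlen : R.length = N := by rw [hR.2, hw, len_w0, hN]
  have hN0 : N ≠ 0 := by
    rw [hN]
    exact (Nat.div_pos (Nat.mul_le_mul hn (Nat.le_sub_of_add_le hn) : 2 * 1 ≤ _) two_pos).ne'
  obtain ⟨M, rfl⟩ := Nat.exists_eq_add_one_of_ne_zero hN0
  rw [Nat.add_sub_cancel, ← coeff_X_mul, ← hlen, coeff_X_mul_wt_length hR]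

end BSDist
end
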